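/- (Preconditioned-score decomposition for radial kernels.) Fix τ > 0 and a radial kernel k_τ(x,y) = exp(−ρ(‖x−y‖₂/τ)) with b_τ(r) = ρ'(r/τ)/(r/τ). Let π be a probability distribution with density such that the expectations below are finite and b_τ(r) > 0 on the support of the kernel-reweighted law π_τ(·|x). Define α_{π,τ}(x) = E_{y∼π_τ(·|x)}[ b_τ(‖x−y‖₂)^{−1} ] and δ_{π,τ}(x) = Cov_{y∼π_τ(·|x)}( b_τ(‖x−y‖₂)^{−1}, b_τ(‖x−y‖₂)(y−x) ) ∈ ℝ^D (a scalar–vector covariance). Then for every x ∈ ℝ^D, the mean-shift direction satisfies V_{π,k_τ}(x) = τ² α_{π,τ}(x) s_{π,k_τ}(x) + δ_{π,τ}(x). Consequently, for two distributions p, q and Δ_{p,q}(x) = η(V_{p,k_τ}(x) − V_{q,k_τ}(x)), one has Δ_{p,q}(x) = ητ²(α_{p,τ}(x) s_{p,k_τ}(x) − α_{q,τ}(x) s_{q,k_τ}(x)) + η(δ_{p,τ}(x) − δ_{q,τ}(x)). -/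

import Mathlib

open MeasureTheory

/-- A translation-invariant radial kernel `k_τ(x,y) = exp(−ρ(‖x−y‖₂/τ))`. -/
noncomputable def radialKernel (D : ℕ) (ρ : ℝ → ℝ) (τ : ℝ)
    (x y : EuclideanSpace ℝ (Fin D)) : ℝ :=
  Real.exp (-ρ (‖x - y‖ / τ))

/-- The radius-dependent weight `b_τ(r) = ρ'(r/τ)/(r/τ)`. -/
noncomputable def radialWeight (ρ' : ℝ → ℝ) (τ r : ℝ) : ℝ :=
  ρ' (r / τ) / (r / τ)

/-- The kernel-smoothed profile `π_{k}(x) = E_{y∼π}[k(x,y)]`. -/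
noncomputable def smoothedProfile {D : ℕ}
    (k : EuclideanSpace ℝ (Fin D) → EuclideanSpace ℝ (Fin D) → ℝ)
    (π : Measure (EuclideanSpace ℝ (Fin D))) (x : EuclideanSpace ℝ (Fin D)) : ℝ :=
  ∫ y, k x y ∂π

/-- The mean-shift direction `V_{π,k}(x)`. -/
noncomputable def meanShift {D : ℕ}
    (k : EuclideanSpace ℝ (Fin D) → EuclideanSpace ℝ (Fin D) → ℝ)
    (π : Measure (EuclideanSpace ℝ (Fin D))) (x : EuclideanSpace ℝ (Fin D)) :
    EuclideanSpace ℝ (Fin D) :=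
  (smoothedProfile k π x)⁻¹ • ∫ y, k x y • (y - x) ∂π

/-- The kernel-induced score `s_{π,k}(x) = ∇_x log π_{k}(x)`. -/
noncomputable def kernelScore {D : ℕ}
    (k : EuclideanSpace ℝ (Fin D) → EuclideanSpace ℝ (Fin D) → ℝ)
    (π : Measure (EuclideanSpace ℝ (Fin D))) (x : EuclideanSpace ℝ (Fin D)) :
    EuclideanSpace ℝ (Fin D) :=
  gradient (fun z => Real.log (smoothedProfile k π z)) x

/-- Vector-valued expectation under the kernel-reweighted law `π_τ(y|x) ∝ k(x,y)π(y)`. -/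
noncomputable def reweightedExp {D : ℕ}
    (k : EuclideanSpace ℝ (Fin D) → EuclideanSpace ℝ (Fin D) → ℝ)
    (π : Measure (EuclideanSpace ℝ (Fin D))) (x : EuclideanSpace ℝ (Fin D))
    (g : EuclideanSpace ℝ (Fin D) → EuclideanSpace ℝ (Fin D)) :
    EuclideanSpace ℝ (Fin D) :=
  (smoothedProfile k π x)⁻¹ • ∫ y, k x y • g y ∂π

/-- Scalar-valued expectation under the kernel-reweighted law `π_τ(y|x) ∝ k(x,y)π(y)`. -/
noncomputable def reweightedExpR {D : ℕ}
    (k : EuclideanSpace ℝ (Fin D) → EuclideanSpace ℝ (Fin D) → ℝ)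
    (π : Measure (EuclideanSpace ℝ (Fin D))) (x : EuclideanSpace ℝ (Fin D))
    (g : EuclideanSpace ℝ (Fin D) → ℝ) : ℝ :=
  (smoothedProfile k π x)⁻¹ * ∫ y, k x y * g y ∂π

/-- The scalar preconditioner `α_{π,τ}(x) = E_{y∼π_τ(·|x)}[ b_τ(‖x−y‖)⁻¹ ]`. -/
noncomputable def precondAlpha {D : ℕ} (ρ ρ' : ℝ → ℝ) (τ : ℝ)
    (π : Measure (EuclideanSpace ℝ (Fin D))) (x : EuclideanSpace ℝ (Fin D)) : ℝ :=
  reweightedExpR (radialKernel D ρ τ) π x (fun y => (radialWeight ρ' τ ‖x - y‖)⁻¹)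

/-- The covariance residual
`δ_{π,τ}(x) = Cov_{y∼π_τ(·|x)}( b_τ(‖x−y‖)⁻¹ , b_τ(‖x−y‖)(y−x) )` (scalar–vector
covariance `Cov(A,Z) = E[AZ] − E[A]E[Z]`). -/
noncomputable def covResidual {D : ℕ} (ρ ρ' : ℝ → ℝ) (τ : ℝ)
    (π : Measure (EuclideanSpace ℝ (Fin D))) (x : EuclideanSpace ℝ (Fin D)) :
    EuclideanSpace ℝ (Fin D) :=
  reweightedExp (radialKernel D ρ τ) π x
      (fun y => (radialWeight ρ' τ ‖x - y‖)⁻¹ • radialWeight ρ' τ ‖x - y‖ • (y - x))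
    - precondAlpha ρ ρ' τ π x •
      reweightedExp (radialKernel D ρ τ) π x (fun y => radialWeight ρ' τ ‖x - y‖ • (y - x))

/-- Regularity package for a distribution `π` and radial kernel data `(ρ, ρ', τ)`:
absolute continuity, finiteness of the relevant expectations, positivity of the smoothed
profile, positivity of `b_τ` on the support of the reweighted law, and a local domination
bound allowing differentiation under the integral sign. -/
def RadialRegular {D : ℕ} (ρ ρ' : ℝ → ℝ) (τ : ℝ)
    (π : Measure (EuclideanSpace ℝ (Fin D))) : Prop :=
  π ≪ volume ∧
  ∀ x : EuclideanSpace ℝ (Fin D),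
    Integrable (fun y => radialKernel D ρ τ x y) π ∧
    Integrable (fun y => (radialKernel D ρ τ x y * radialWeight ρ' τ ‖x - y‖) • (y - x)) π ∧
    Integrable (fun y => radialKernel D ρ τ x y • (y - x)) π ∧
    Integrable (fun y => radialKernel D ρ τ x y * (radialWeight ρ' τ ‖x - y‖)⁻¹) π ∧
    0 < smoothedProfile (radialKernel D ρ τ) π x ∧
    (∀ᵐ y ∂π, 0 < radialWeight ρ' τ ‖x - y‖) ∧
    (∃ ε > 0, ∃ g : EuclideanSpace ℝ (Fin D) → ℝ, Integrable g π ∧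
      ∀ᵐ y ∂π, ∀ x' ∈ Metric.ball x ε,
        (τ ^ 2)⁻¹ * |radialWeight ρ' τ ‖x' - y‖| * ‖y - x'‖ * radialKernel D ρ τ x' y ≤ g y)

/-!
Differentiating under the integral sign, `∇ₓ k_τ(x,y) = τ⁻² b_τ(‖x−y‖) k_τ(x,y) (y−x)`, so
`τ² s_{π,k_τ}(x) = E_{π_τ(·|x)}[b_τ (y−x)]`. Since `b_τ > 0` almost surely,
`y − x = b_τ⁻¹ · b_τ (y−x)`, and splitting
`E[b_τ⁻¹ · b_τ (y−x)] = E[b_τ⁻¹] E[b_τ (y−x)] + Cov(b_τ⁻¹, b_τ (y−x))` gives `V = τ² α s + δ`;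
the statement about `Δ_{p,q}` is a linear combination of two instances.

The kernel is `φ(‖x−y‖)` with `φ` differentiable, so it is differentiable in `x` except at
`x = y`. The domination hypothesis bounds `|φ'|` along segments, which makes `x ↦ k_τ(x,y)`
locally Lipschitz uniformly in `y`; this, together with `π{x} = 0`, is what differentiation
under the integral needs.
-/
open Set

lemma abs_sub_le_mul_of_abs_deriv_le {φ φ' : ℝ → ℝ} {K a b : ℝ}
    (hφ : ∀ t, HasDerivAt φ (φ' t) t) (hab : a ≤ b) (hbound : ∀ t ∈ Ioo a b, |φ' t| ≤ K) :
    |φ b - φ a| ≤ K * (b - a) := by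
  rcases hab.eq_or_lt with rfl | hlt
  · simp
  obtain ⟨c, hc, hslope⟩ := exists_hasDerivAt_eq_slope φ φ' hlt
    (fun t _ => (hφ t).continuousAt.continuousWithinAt) (fun t _ => hφ t)
  have hba : 0 < b - a := sub_pos.2 hlt
  calc |φ b - φ a| = |φ' c| * (b - a) := by
        rw [hslope, abs_div, abs_of_pos hba, div_mul_cancel₀ _ hba.ne']
    _ ≤ K * (b - a) := by gcongr; exact hbound c hc

lemma lipschitzOnWith_comp_norm_sub {E : Type*} [NormedAddCommGroup E] [NormedSpace ℝ E]
    {φ φ' : ℝ → ℝ} {K : NNReal} {s : Set E} {y : E}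
    (hφ : ∀ t, HasDerivAt φ (φ' t) t) (hs : Convex ℝ s)
    (hbound : ∀ z ∈ s, z ≠ y → |φ' ‖z - y‖| ≤ K) :
    LipschitzOnWith K (fun z => φ ‖z - y‖) s := by
  have key : ∀ x₁ ∈ s, ∀ x₂ ∈ s, ‖x₂ - y‖ ≤ ‖x₁ - y‖ →
      |φ ‖x₁ - y‖ - φ ‖x₂ - y‖| ≤ K * ‖x₁ - x₂‖ := by
    intro x₁ h₁ x₂ h₂ hle
    have hderiv : ∀ t ∈ Ioo ‖x₂ - y‖ ‖x₁ - y‖, |φ' t| ≤ K := by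
      intro t ht
      obtain ⟨z, hz, rfl⟩ : t ∈ (fun z => ‖z - y‖) '' segment ℝ x₂ x₁ :=
        (convex_segment x₂ x₁).isPreconnected.intermediate_value (left_mem_segment ℝ x₂ x₁)
          (right_mem_segment ℝ x₂ x₁) (by fun_prop) (Ioo_subset_Icc_self ht)
      refine hbound z (hs.segment_subset h₂ h₁ hz) fun hzy => ?_
      simp only [hzy, sub_self, norm_zero, mem_Ioo] at ht
      linarith [norm_nonneg (x₂ - y)]
    calc |φ ‖x₁ - y‖ - φ ‖x₂ - y‖| ≤ K * (‖x₁ - y‖ - ‖x₂ - y‖) :=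
          abs_sub_le_mul_of_abs_deriv_le hφ hle hderiv
      _ ≤ K * ‖x₁ - x₂‖ := by
          gcongr; simpa using norm_sub_norm_le (x₁ - y) (x₂ - y)
  refine LipschitzOnWith.of_dist_le_mul fun x₁ h₁ x₂ h₂ => ?_
  rw [Real.dist_eq, dist_eq_norm]
  rcases le_total ‖x₂ - y‖ ‖x₁ - y‖ with hle | hle
  · exact key x₁ h₁ x₂ h₂ hle
  · rw [abs_sub_comm, norm_sub_rev x₁ x₂]
    exact key x₂ h₂ x₁ h₁ hle

lemma hasFDerivAt_norm_sub {F : Type*} [NormedAddCommGroup F] [InnerProductSpace ℝ F]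
    {x y : F} (h : x ≠ y) :
    HasFDerivAt (fun z => ‖z - y‖) (‖x - y‖⁻¹ • innerSL ℝ (x - y)) x := by
  have hpos : 0 < ‖x - y‖ := norm_pos_iff.2 (sub_ne_zero.2 h)
  have hsqrt := ((hasFDerivAt_id x).sub_const y).norm_sq.sqrt (by positivity)
  simp only [Real.sqrt_sq (norm_nonneg _)] at hsqrt
  refine hsqrt.congr_fderiv ?_
  ext v
  simp only [id_eq, one_div, mul_inv_rev, map_sub, ContinuousLinearMap.comp_id,
    smul_apply, sub_apply, coe_innerSL_apply, nsmul_eq_mul,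
    Nat.cast_ofNat, smul_eq_mul]
  field_simp

lemma HasGradientAt.log {F : Type*} [NormedAddCommGroup F] [InnerProductSpace ℝ F]
    [CompleteSpace F] {f : F → ℝ} {g x : F} (hf : HasGradientAt f g x) (hx : f x ≠ 0) :
    HasGradientAt (fun z => Real.log (f z)) ((f x)⁻¹ • g) x := by
  rw [hasGradientAt_iff_hasFDerivAt, map_smulₛₗ, RCLike.conj_to_real]
  exact (hasGradientAt_iff_hasFDerivAt.1 hf).log hx

section RadialKernel

variable {D : ℕ} {ρ ρ' : ℝ → ℝ} {τ : ℝ}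

lemma hasDerivAt_exp_neg_comp_div (hρ : ∀ r, HasDerivAt ρ (ρ' r) r) (τ r : ℝ) :
    HasDerivAt (fun t => Real.exp (-ρ (t / τ))) (-(ρ' (r / τ) / τ) * Real.exp (-ρ (r / τ))) r := by
  have h := ((hρ (r / τ)).comp r ((hasDerivAt_id r).div_const τ)).neg.exp
  refine h.congr_deriv ?_
  simp only [Function.comp_apply, Pi.neg_apply, id]
  ring

lemma inv_sq_mul_radialWeight_mul (hτ : τ ≠ 0) {r : ℝ} (hr : r ≠ 0) :
    (τ ^ 2)⁻¹ * radialWeight ρ' τ r * r = ρ' (r / τ) / τ := by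
  rw [radialWeight]
  field_simp

lemma hasFDerivAt_radialKernel (hτ : τ ≠ 0) (hρ : ∀ r, HasDerivAt ρ (ρ' r) r)
    {x y : EuclideanSpace ℝ (Fin D)} (h : x ≠ y) :
    HasFDerivAt (fun z => radialKernel D ρ τ z y)
      (innerSL ℝ ((τ ^ 2)⁻¹ • (radialKernel D ρ τ x y * radialWeight ρ' τ ‖x - y‖) • (y - x)))
      x := by
  have hr : ‖x - y‖ ≠ 0 := norm_ne_zero_iff.2 (sub_ne_zero.2 h)
  refine ((hasDerivAt_exp_neg_comp_div hρ τ _).comp_hasFDerivAt x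
    (hasFDerivAt_norm_sub h)).congr_fderiv ?_
  ext v
  rw [← inv_sq_mul_radialWeight_mul hτ hr]
  simp only [radialKernel, neg_mul, map_sub, map_smul, neg_smul, neg_apply,
    smul_apply, sub_apply, coe_innerSL_apply, smul_eq_mul]
  field_simp
  ring

lemma lipschitzOnWith_radialKernel (hτ : τ ≠ 0) (hρ : ∀ r, HasDerivAt ρ (ρ' r) r)
    {s : Set (EuclideanSpace ℝ (Fin D))} (hs : Convex ℝ s) {y : EuclideanSpace ℝ (Fin D)} {C : ℝ}
    (hbound : ∀ z ∈ s,
      (τ ^ 2)⁻¹ * |radialWeight ρ' τ ‖z - y‖| * ‖y - z‖ * radialKernel D ρ τ z y ≤ C) :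
    LipschitzOnWith (Real.nnabs C) (fun z => radialKernel D ρ τ z y) s := by
  refine lipschitzOnWith_comp_norm_sub (hasDerivAt_exp_neg_comp_div hρ τ) hs fun z hz hzy => ?_
  have hr : ‖z - y‖ ≠ 0 := norm_ne_zero_iff.2 (sub_ne_zero.2 hzy)
  rw [Real.coe_nnabs, ← inv_sq_mul_radialWeight_mul hτ hr]
  calc _ = (τ ^ 2)⁻¹ * |radialWeight ρ' τ ‖z - y‖| * ‖y - z‖ * radialKernel D ρ τ z y := by
        rw [radialKernel, norm_sub_rev y z, abs_mul, abs_neg, abs_mul, abs_mul, abs_inv,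
          abs_of_nonneg (sq_nonneg τ), abs_norm, Real.abs_exp]
    _ ≤ |C| := (hbound z hz).trans (le_abs_self C)

lemma hasGradientAt_smoothedProfile_radialKernel (hτ : τ ≠ 0)
    (hρ : ∀ r, HasDerivAt ρ (ρ' r) r) {π : Measure (EuclideanSpace ℝ (Fin D))}
    {x : EuclideanSpace ℝ (Fin D)} (hne : ∀ᵐ y ∂π, y ≠ x)
    (hk : Integrable (fun y => radialKernel D ρ τ x y) π)
    (hkb : Integrable (fun y => (radialKernel D ρ τ x y * radialWeight ρ' τ ‖x - y‖) • (y - x)) π)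
    (hdom : ∃ ε > 0, ∃ g : EuclideanSpace ℝ (Fin D) → ℝ, Integrable g π ∧
      ∀ᵐ y ∂π, ∀ x' ∈ Metric.ball x ε,
        (τ ^ 2)⁻¹ * |radialWeight ρ' τ ‖x' - y‖| * ‖y - x'‖ * radialKernel D ρ τ x' y ≤ g y) :
    HasGradientAt (smoothedProfile (radialKernel D ρ τ) π)
      ((τ ^ 2)⁻¹ • ∫ y, (radialKernel D ρ τ x y * radialWeight ρ' τ ‖x - y‖) • (y - x) ∂π) x := by
  obtain ⟨ε, hε, g, hg, hbound⟩ := hdom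
  have hρc : Continuous ρ := continuous_iff_continuousAt.2 fun r => (hρ r).continuousAt
  have hρ'm : Measurable ρ' := by
    rw [show ρ' = deriv ρ from funext fun r => (hρ r).deriv.symm]
    exact measurable_deriv ρ
  have hkc : ∀ x', Continuous (radialKernel D ρ τ x') := fun x' => by
    unfold radialKernel
    fun_prop
  have hbm : Measurable (radialWeight ρ' τ) := by
    unfold radialWeight
    fun_prop
  have hkxm : Measurable (radialKernel D ρ τ x) := (hkc x).measurable
  have hF'm : AEStronglyMeasurable (fun y => innerSL ℝ
      ((τ ^ 2)⁻¹ • (radialKernel D ρ τ x y * radialWeight ρ' τ ‖x - y‖) • (y - x))) π :=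
    ((innerSL ℝ).continuous.measurable.comp (by fun_prop)).aestronglyMeasurable
  obtain ⟨-, hderiv⟩ := hasFDerivAt_integral_of_dominated_loc_of_lip (Metric.ball_mem_nhds x hε)
    (.of_forall fun x' => (hkc x').aestronglyMeasurable) hk hF'm
    (hbound.mono fun y hy => lipschitzOnWith_radialKernel hτ hρ (convex_ball x ε) hy) hg
    (hne.mono fun y hy => hasFDerivAt_radialKernel hτ hρ hy.symm)
  rw [hasGradientAt_iff_hasFDerivAt]
  refine hderiv.congr_fderiv ?_
  rw [ContinuousLinearMap.integral_comp_comm (φ := fun y =>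
    (τ ^ 2)⁻¹ • (radialKernel D ρ τ x y * radialWeight ρ' τ ‖x - y‖) • (y - x)) _
    (hkb.smul ((τ ^ 2)⁻¹)),
    integral_smul]
  ext v
  simp only [map_smul, smul_apply, smul_eq_mul, InnerProductSpace.toDual_apply_apply]
  rfl

lemma kernelScore_radialKernel (hτ : τ ≠ 0) (hρ : ∀ r, HasDerivAt ρ (ρ' r) r)
    {π : Measure (EuclideanSpace ℝ (Fin D))} (hπ : RadialRegular ρ ρ' τ π)
    (x : EuclideanSpace ℝ (Fin D)) :
    kernelScore (radialKernel D ρ τ) π x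
      = ((smoothedProfile (radialKernel D ρ τ) π x)⁻¹ * (τ ^ 2)⁻¹) •
          ∫ y, (radialKernel D ρ τ x y * radialWeight ρ' τ ‖x - y‖) • (y - x) ∂π := by
  obtain ⟨hac, hreg⟩ := hπ
  obtain ⟨hk, hkb, -, -, hpos, -, hdom⟩ := hreg x
  rcases D.eq_zero_or_pos with rfl | hD
  · exact Subsingleton.elim _ _
  have : NeZero D := ⟨hD.ne'⟩
  have hne : ∀ᵐ y ∂π, y ≠ x := hac.ae_le (Measure.ae_ne volume x)
  rw [kernelScore, mul_smul]
  exact ((hasGradientAt_smoothedProfile_radialKernel hτ hρ hne hk hkb hdom).log hpos.ne').gradient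

theorem meanShift_radialKernel_eq (hτ : τ ≠ 0) (hρ : ∀ r, HasDerivAt ρ (ρ' r) r)
    {π : Measure (EuclideanSpace ℝ (Fin D))} (hπ : RadialRegular ρ ρ' τ π)
    (x : EuclideanSpace ℝ (Fin D)) :
    meanShift (radialKernel D ρ τ) π x
      = (τ ^ 2 * precondAlpha ρ ρ' τ π x) • kernelScore (radialKernel D ρ τ) π x
        + covResidual ρ ρ' τ π x := by
  set f := smoothedProfile (radialKernel D ρ τ) π x
  set α := precondAlpha ρ ρ' τ π x
  set I := ∫ y, (radialKernel D ρ τ x y * radialWeight ρ' τ ‖x - y‖) • (y - x) ∂π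
  have hb : ∀ᵐ y ∂π, 0 < radialWeight ρ' τ ‖x - y‖ := (hπ.2 x).2.2.2.2.2.1
  have hcov : covResidual ρ ρ' τ π x = meanShift (radialKernel D ρ τ) π x - (α * f⁻¹) • I := by
    rw [covResidual, reweightedExp, reweightedExp, meanShift, mul_smul]
    congr 2
    · refine integral_congr_ae (hb.mono fun y hy => ?_)
      simp only [inv_smul_smul₀ hy.ne']
    · simp only [f, I, smul_smul]
  rw [hcov, kernelScore_radialKernel hτ hρ hπ x, smul_smul,
    show τ ^ 2 * α * (f⁻¹ * (τ ^ 2)⁻¹) = α * f⁻¹ by field_simp]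
  abel

end RadialKernel

theorem radial_precond_decomposition_general {D : ℕ} (ρ ρ' : ℝ → ℝ) (τ η : ℝ)
    (hτ : 0 < τ)
    (hρ : ∀ r, HasDerivAt ρ (ρ' r) r)
    (p q : Measure (EuclideanSpace ℝ (Fin D)))
    (hp : RadialRegular ρ ρ' τ p) (hq : RadialRegular ρ ρ' τ q) :
    (∀ π : Measure (EuclideanSpace ℝ (Fin D)), (π = p ∨ π = q) →
      ∀ x, meanShift (radialKernel D ρ τ) π x
        = (τ ^ 2 * precondAlpha ρ ρ' τ π x) • kernelScore (radialKernel D ρ τ) π x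
          + covResidual ρ ρ' τ π x)
    ∧
    (∀ x, η • (meanShift (radialKernel D ρ τ) p x - meanShift (radialKernel D ρ τ) q x)
      = (η * τ ^ 2) • (precondAlpha ρ ρ' τ p x • kernelScore (radialKernel D ρ τ) p x
            - precondAlpha ρ ρ' τ q x • kernelScore (radialKernel D ρ τ) q x)
        + η • (covResidual ρ ρ' τ p x - covResidual ρ ρ' τ q x)) := by
  have hp' := meanShift_radialKernel_eq hτ.ne' hρ hp
  have hq' := meanShift_radialKernel_eq hτ.ne' hρ hq
  refine ⟨fun π hπ => ?_, fun x => ?_⟩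
  · rcases hπ with rfl | rfl
    exacts [hp', hq']
  · rw [hp', hq']
    module

/-- Preconditioned-score decomposition of mean shift for radial kernels.
For a radial kernel with differentiable `ρ` and `b_τ > 0` on the support of the reweighted
law, the mean shift decomposes as `V_{π,k_τ}(x) = τ² α_{π,τ}(x) s_{π,k_τ}(x) + δ_{π,τ}(x)`;
consequently the drifting field satisfies
`Δ_{p,q}(x) = ητ²(α_{p,τ}(x) s_{p,k_τ}(x) − α_{q,τ}(x) s_{q,k_τ}(x)) + η(δ_{p,τ}(x) − δ_{q,τ}(x))`. -/
theorem radial_precond_decomposition {D : ℕ} (ρ ρ' : ℝ → ℝ) (τ η : ℝ)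
    (hτ : 0 < τ) (hη : 0 < η)
    (hρ : ∀ r, HasDerivAt ρ (ρ' r) r)
    (p q : Measure (EuclideanSpace ℝ (Fin D)))
    [IsProbabilityMeasure p] [IsProbabilityMeasure q]
    (hp : RadialRegular ρ ρ' τ p) (hq : RadialRegular ρ ρ' τ q) :
    (∀ π : Measure (EuclideanSpace ℝ (Fin D)), (π = p ∨ π = q) →
      ∀ x, meanShift (radialKernel D ρ τ) π x
        = (τ ^ 2 * precondAlpha ρ ρ' τ π x) • kernelScore (radialKernel D ρ τ) π x
          + covResidual ρ ρ' τ π x)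
    ∧
    (∀ x, η • (meanShift (radialKernel D ρ τ) p x - meanShift (radialKernel D ρ τ) q x)
      = (η * τ ^ 2) • (precondAlpha ρ ρ' τ p x • kernelScore (radialKernel D ρ τ) p x
            - precondAlpha ρ ρ' τ q x • kernelScore (radialKernel D ρ τ) q x)
        + η • (covResidual ρ ρ' τ p x - covResidual ρ ρ' τ q x)) :=
  radial_precond_decomposition_general ρ ρ' τ η hτ hρ p q hp hq
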